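/- Let R be a commutative ring of characteristic p > 0 and let x_1, …, x_r ∈ R be such that x_1^{p^e}, …, x_r^{p^e} is a regular sequence on R for all e ≥ 0. Then [x_1], …, [x_r] is a regular sequence on W_n(R) for every n ≥ 1. -/

import Mathlib

/-! Write `J_n(l)` for the ideal of `W_n(R)` generated by the Teichmüller lifts of the entries
of `l`, and `l^p` for the list of `p`-th powers. The zeroth coordinate and the Verschiebung give an
exact sequence `0 → W_n(R)/J_n(l^p) → W_{n+1}(R)/J_{n+1}(l) → R/(l) → 0`, whose first map is
injective once `l` is regular (induction on the length of `l`). Since `[x] · V y = V ([x^p] · y)`,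
multiplication by `[x]` on the middle term restricts to multiplication by `[x^p]` on the left one,
so regularity of `[x]` modulo `J_{n+1}(l)` follows from that of `x` modulo `(l)` and, by induction
on `n`, of `[x^p]` modulo `J_n(l^p)`: this is where all Frobenius powers of the sequence enter. -/

noncomputable section

/-- Verschiebung on truncated Witt vectors. -/
def TWV.V {p : ℕ} [Fact p.Prime] {R : Type*} [CommRing R] {n : ℕ}
    (x : TruncatedWittVector p n R) : TruncatedWittVector p (n + 1) R :=
  WittVector.truncateFun (n + 1) (WittVector.verschiebung x.out)

/-- Frobenius on truncated Witt vectors over a ring of characteristic `p`,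
acting coordinatewise by `x ↦ x ^ p`. -/
def TWV.F {p : ℕ} [Fact p.Prime] {R : Type*} [CommRing R] {n : ℕ}
    (x : TruncatedWittVector p n R) : TruncatedWittVector p n R :=
  TruncatedWittVector.mk p fun i => x.coeff i ^ p

/-- Teichmüller lift to truncated Witt vectors. -/
def TWV.tm (p : ℕ) [Fact p.Prime] {R : Type*} [CommRing R] (n : ℕ) (x : R) :
    TruncatedWittVector p n R :=
  WittVector.truncateFun n (WittVector.teichmuller p x)

/-- Witt-vector tight closure of an ideal of the truncated Witt vectors. -/
def TWV.star {p : ℕ} [Fact p.Prime] {R : Type*} [CommRing R] {n : ℕ}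
    (I : Ideal (TruncatedWittVector p n R)) : Set (TruncatedWittVector p n R) :=
  {α | ∃ c ∈ nonZeroDivisors R, ∀ e : ℕ,
    TWV.tm p n c * TWV.F^[e] α ∈ Ideal.span (TWV.F^[e] '' I)}

namespace RingTheory.Sequence

lemma isWeaklyRegular_append_singleton_iff {A : Type*} [CommRing A] (l : List A) (x : A) :
    IsWeaklyRegular A (l ++ [x]) ↔
      IsWeaklyRegular A l ∧ ∀ a, x * a ∈ Ideal.ofList l → a ∈ Ideal.ofList l := by
  rw [isWeaklyRegular_append_iff, isWeaklyRegular_singleton_iff,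
    isSMulRegular_quotient_iff_mem_of_smul_mem, smul_eq_mul, Ideal.mul_top]
  rfl

end RingTheory.Sequence

open WittVector RingTheory.Sequence

namespace TWV

variable {p : ℕ} [Fact p.Prime] {R : Type*} [CommRing R] {n : ℕ}

lemma truncate_verschiebung_congr {x y : WittVector p R} (h : truncate n x = truncate n y) :
    truncate (n + 1) (verschiebung x) = truncate (n + 1) (verschiebung y) := by
  ext ⟨_ | j, hj⟩
  · simp only [coeff_truncate, verschiebung_coeff_zero]
  · simpa only [coeff_truncate, verschiebung_coeff_add_one] using
      congrArg (TruncatedWittVector.coeff ⟨j, Nat.lt_of_succ_lt_succ hj⟩) h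

lemma tm_eq (r : R) : tm p n r = truncate n (teichmuller p r) := rfl

lemma V_truncate (x : WittVector p R) : V (truncate n x) = truncate (n + 1) (verschiebung x) :=
  truncate_verschiebung_congr (TruncatedWittVector.truncateFun_out _)

lemma V_add (x y : TruncatedWittVector p n R) : V (x + y) = V x + V y := by
  obtain ⟨x, rfl⟩ := truncate_surjective p n R x
  obtain ⟨y, rfl⟩ := truncate_surjective p n R y
  simp only [← map_add, V_truncate]

def VAddHom : TruncatedWittVector p n R →+ TruncatedWittVector p (n + 1) R :=
  AddMonoidHom.mk' V V_add

lemma V_zero : V (0 : TruncatedWittVector p n R) = 0 :=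
  map_zero VAddHom

lemma V_sub (x y : TruncatedWittVector p n R) : V (x - y) = V x - V y :=
  map_sub VAddHom x y

lemma coeff_V_succ (x : TruncatedWittVector p n R) (j : Fin n) :
    (V x).coeff j.succ = x.coeff j := by
  obtain ⟨x, rfl⟩ := truncate_surjective p n R x
  rw [V_truncate, coeff_truncate, coeff_truncate]
  rfl

lemma V_injective : Function.Injective (V : TruncatedWittVector p n R → _) := fun x y hxy =>
  TruncatedWittVector.ext fun j => by rw [← coeff_V_succ, hxy, coeff_V_succ]

lemma tm_mul_V [CharP R p] (r : R) (x : TruncatedWittVector p n R) :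
    tm p (n + 1) r * V x = V (tm p n (r ^ p) * x) := by
  obtain ⟨x, rfl⟩ := truncate_surjective p n R x
  have hF : frobenius (teichmuller p r) = teichmuller p (r ^ p) := by
    rw [frobenius_eq_map_frobenius, map_teichmuller, frobenius_def]
  rw [tm_eq, tm_eq, ← map_mul, V_truncate, ← map_mul, V_truncate, ← hF,
    mul_comm (WittVector.frobenius _), verschiebung_mul_frobenius, mul_comm]

def constantCoeff : TruncatedWittVector p (n + 1) R →+* R :=
  (truncate (n + 1)).liftOfSurjective (truncate_surjective p (n + 1) R)
    ⟨WittVector.constantCoeff, fun x hx => (mem_ker_truncate _ x).1 hx 0 n.succ_pos⟩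

lemma constantCoeff_truncate (x : WittVector p R) :
    constantCoeff (truncate (n + 1) x) = x.coeff 0 :=
  RingHom.liftOfSurjective_comp_apply _ _ _ x

lemma constantCoeff_tm (r : R) : constantCoeff (tm p (n + 1) r) = r :=
  constantCoeff_truncate (teichmuller p r)

lemma constantCoeff_surjective :
    Function.Surjective (constantCoeff : TruncatedWittVector p (n + 1) R → R) :=
  fun r => ⟨tm p (n + 1) r, constantCoeff_tm r⟩

lemma constantCoeff_V (x : TruncatedWittVector p n R) : constantCoeff (V x) = 0 := by
  obtain ⟨x, rfl⟩ := truncate_surjective p n R x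
  rw [V_truncate, constantCoeff_truncate, verschiebung_coeff_zero]

lemma exists_eq_V_of_constantCoeff_eq_zero {x : TruncatedWittVector p (n + 1) R}
    (hx : constantCoeff x = 0) : ∃ y : TruncatedWittVector p n R, V y = x := by
  obtain ⟨x, rfl⟩ := truncate_surjective p (n + 1) R x
  refine ⟨truncate n (WittVector.mk p fun i => x.coeff (i + 1)), ?_⟩
  rw [V_truncate]
  congr 1
  ext (_ | i)
  · rw [verschiebung_coeff_zero, ← constantCoeff_truncate, hx]
  · rfl

end TWV


namespace TWV

variable {p : ℕ} [Fact p.Prime] {R : Type*} [CommRing R] {n : ℕ}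

variable (p n) in
def tmIdeal (l : List R) : Ideal (TruncatedWittVector p n R) :=
  Ideal.ofList (l.map (tm p n))

lemma tmIdeal_nil : tmIdeal p n ([] : List R) = ⊥ :=
  Ideal.ofList_nil

lemma tmIdeal_append_singleton (l : List R) (x : R) :
    tmIdeal p n (l ++ [x]) = tmIdeal p n l ⊔ Ideal.span {tm p n x} := by
  rw [tmIdeal, List.map_append, Ideal.ofList_append, List.map_singleton, Ideal.ofList_singleton,
    tmIdeal]

lemma tm_mem_tmIdeal {l : List R} {x : R} (hx : x ∈ l) : tm p n x ∈ tmIdeal p n l :=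
  Ideal.subset_span (List.mem_map_of_mem hx)

variable (p n) in
lemma map_constantCoeff_tmIdeal (l : List R) :
    Ideal.map (constantCoeff (p := p)) (tmIdeal p (n + 1) l) = Ideal.ofList l := by
  rw [tmIdeal, Ideal.map_ofList, List.map_map]
  congr 1
  exact List.map_id'' constantCoeff_tm l

lemma tmIdeal_ne_top {l : List R} (hl : Ideal.ofList l ≠ ⊤) : tmIdeal p (n + 1) l ≠ ⊤ :=
  fun h => hl (by rw [← map_constantCoeff_tmIdeal p n, h, Ideal.map_top])

lemma constantCoeff_mem_ofList {l : List R} {x : TruncatedWittVector p (n + 1) R}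
    (hx : x ∈ tmIdeal p (n + 1) l) : constantCoeff x ∈ Ideal.ofList l :=
  map_constantCoeff_tmIdeal p n l ▸ Ideal.mem_map_of_mem _ hx

lemma exists_eq_add_V_of_constantCoeff_mem {l : List R} {x : TruncatedWittVector p (n + 1) R}
    (hx : constantCoeff x ∈ Ideal.ofList l) :
    ∃ δ ∈ tmIdeal p (n + 1) l, ∃ y : TruncatedWittVector p n R, x = δ + V y := by
  rw [← map_constantCoeff_tmIdeal p n,
    Ideal.mem_map_iff_of_surjective _ (constantCoeff_surjective (p := p))] at hx
  obtain ⟨δ, hδ, hδx⟩ := hx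
  obtain ⟨y, hy⟩ :=
    exists_eq_V_of_constantCoeff_eq_zero (x := x - δ) (by rw [map_sub, hδx, sub_self])
  exact ⟨δ, hδ, y, by rw [hy, add_sub_cancel]⟩

lemma V_mem_tmIdeal [CharP R p] {l : List R} {y : TruncatedWittVector p n R}
    (hy : y ∈ tmIdeal p n (l.map (· ^ p))) : V y ∈ tmIdeal p (n + 1) l := by
  suffices ∀ a, V (a * y) ∈ tmIdeal p (n + 1) l by simpa using this 1
  induction hy using Submodule.span_induction with
  | mem z hz =>
    obtain ⟨_, hrp, rfl⟩ := List.mem_map.1 hz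
    obtain ⟨r, hr, rfl⟩ := List.mem_map.1 hrp
    intro a
    rw [mul_comm, ← tm_mul_V]
    exact Ideal.mul_mem_right _ _ (tm_mem_tmIdeal hr)
  | zero => simp [V_zero]
  | add z w _ _ hz hw => intro a; rw [mul_add, V_add]; exact add_mem (hz a) (hw a)
  | smul b z _ hz => intro a; rw [smul_eq_mul, ← mul_assoc]; exact hz _

section CharP

variable [CharP R p]

theorem mem_tmIdeal_of_V_mem {l : List R} (hl : IsWeaklyRegular R l)
    {y : TruncatedWittVector p n R} (hy : V y ∈ tmIdeal p (n + 1) l) :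
    y ∈ tmIdeal p n (l.map (· ^ p)) := by
  induction l using List.reverseRecOn generalizing y with
  | nil =>
    rw [tmIdeal_nil, Ideal.mem_bot, ← V_zero] at hy
    rw [V_injective hy]
    exact zero_mem _
  | append_singleton l x ih =>
    obtain ⟨hl, hx⟩ := (isWeaklyRegular_append_singleton_iff l x).1 hl
    rw [tmIdeal_append_singleton, Submodule.mem_sup] at hy
    obtain ⟨γ, hγ, _, hc, hVy⟩ := hy
    obtain ⟨c, rfl⟩ := Ideal.mem_span_singleton'.1 hc
    have hxc : x * constantCoeff c = -constantCoeff γ := by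
      have := congrArg constantCoeff hVy
      rw [constantCoeff_V, map_add, map_mul, constantCoeff_tm] at this
      linear_combination this
    obtain ⟨δ, hδ, z, rfl⟩ := exists_eq_add_V_of_constantCoeff_mem
      (hx _ (hxc ▸ neg_mem (constantCoeff_mem_ofList hγ)))
    have hVsub : V (y - tm p n (x ^ p) * z) = γ + δ * tm p (n + 1) x := by
      rw [V_sub, ← tm_mul_V, ← hVy]
      ring
    have hsub := ih hl (hVsub ▸ add_mem hγ (Ideal.mul_mem_right _ _ hδ))
    rw [List.map_append, List.map_singleton, tmIdeal_append_singleton,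
      ← sub_add_cancel y (tm p n (x ^ p) * z)]
    exact add_mem (Ideal.mem_sup_left hsub)
      (Ideal.mem_sup_right (Ideal.mul_mem_right _ _ (Ideal.mem_span_singleton_self _)))

theorem mem_tmIdeal_of_tm_mul_mem {l : List R} {x : R}
    (hl : ∀ e, IsWeaklyRegular R ((l ++ [x]).map (· ^ p ^ e)))
    {y : TruncatedWittVector p n R} (hy : tm p n x * y ∈ tmIdeal p n l) :
    y ∈ tmIdeal p n l := by
  induction n generalizing l x with
  | zero =>
    rw [show y = 0 from TruncatedWittVector.ext fun i => i.elim0]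
    exact zero_mem _
  | succ n ih =>
    obtain ⟨hl₀, hx⟩ := (isWeaklyRegular_append_singleton_iff l x).1 (by simpa using hl 0)
    have hxy := constantCoeff_mem_ofList hy
    rw [map_mul, constantCoeff_tm] at hxy
    obtain ⟨δ, hδ, z, rfl⟩ := exists_eq_add_V_of_constantCoeff_mem (hx _ hxy)
    have hVz : V (tm p n (x ^ p) * z) ∈ tmIdeal p (n + 1) l := by
      rw [← tm_mul_V, ← add_sub_cancel_left (tm p (n + 1) x * δ) (tm p (n + 1) x * V z),
        ← mul_add]
      exact sub_mem hy (Ideal.mul_mem_left _ _ hδ)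
    have hz : z ∈ tmIdeal p n (l.map (· ^ p)) :=
      ih (fun e => by simpa [Function.comp_def, ← pow_mul, pow_succ'] using hl (e + 1))
        (mem_tmIdeal_of_V_mem hl₀ hVz)
    exact add_mem hδ (V_mem_tmIdeal hz)

theorem isWeaklyRegular_map_tm {l : List R} (hl : ∀ e, IsWeaklyRegular R (l.map (· ^ p ^ e))) :
    IsWeaklyRegular (TruncatedWittVector p n R) (l.map (tm p n)) := by
  induction l using List.reverseRecOn with
  | nil => exact .nil _ _
  | append_singleton l x ih =>
    rw [List.map_append, List.map_singleton, isWeaklyRegular_append_singleton_iff]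
    refine ⟨ih fun e => ?_, fun y => mem_tmIdeal_of_tm_mul_mem hl⟩
    exact ((isWeaklyRegular_append_iff R _ _).1 (List.map_append ▸ hl e)).1

end CharP

end TWV

/-- If `x₁^{p^e}, …, x_r^{p^e}` is a regular sequence on `R` for all `e ≥ 0`,
then `[x₁], …, [x_r]` is a regular sequence on `W_n(R)` for every `n ≥ 1`. -/
theorem stmt13 {p : ℕ} [Fact p.Prime] {R : Type*} [CommRing R] [CharP R p]
    (xs : List R)
    (h : ∀ e : ℕ, RingTheory.Sequence.IsRegular R (xs.map (· ^ p ^ e)))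
    (n : ℕ) (hn : 1 ≤ n) :
    RingTheory.Sequence.IsRegular (TruncatedWittVector p n R)
      (xs.map (TWV.tm p n)) := by
  obtain ⟨n, rfl⟩ : ∃ m, n = m + 1 := ⟨n - 1, by omega⟩
  refine ⟨TWV.isWeaklyRegular_map_tm fun e => (h e).toIsWeaklyRegular, ?_⟩
  have hxs : Ideal.ofList xs ≠ ⊤ := by
    simpa [smul_eq_mul, Ideal.mul_top, eq_comm] using (h 0).top_ne_smul
  rw [smul_eq_mul, Ideal.mul_top]
  exact (TWV.tmIdeal_ne_top hxs).symm
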